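/- arXiv:2209.01189 — 2 statements merged into one kernel-verified Lean document; each statement's English description precedes it below -/
import Mathlib

section
/- Let G be a group and Λ = ℤ[G]. Suppose b : Λ̂ × (Λ̂/Λ) → Λ is a Λ-balanced biadditive map which is left Λ-linear in the first variable (b(rλ̂, x) = r·b(λ̂, x)). Then b is identically zero. -/
/-!
Taking the coefficient at `1` turns a left `Λ`-linear map `φ : Λ̂ → Λ` into an additive map
`u : ℤ^G ≅ Λ̂ → ℤ` for which only finitely many right translates `F ↦ u (F (· h))` are nonzero on a
given `F`. If `u` also kills `ℤ[G] = ι(Λ)`, it is zero: for infinite `G` choose a countably infinite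
subgroup `K` and cut `F` into pieces meeting every coset of `K` at most once. If such a piece `P`
had `u P ≠ 0`, then `R = ∑ₙ Nⁿ P (· kₙ)` (with `kₙ` enumerating `K` and `N` large) would have a
nonzero translate by every `κ ∈ K`, since `u (R (· κ))` is a base-`N` expansion with the digit
`u P`. Both the splitting of `F` and the expansion of `u (R (· κ))` rest on Specker's theorem: a
homomorphism `ℤ^ℕ → ℤ` killing all unit vectors vanishes, because every sequence is the sum of
one divisible termwise by `2ⁿ` and one divisible termwise by `3ⁿ`.

For the theorem, `f ↦ b(ι 1, [f])` is left `Λ`-linear by balancedness and kills `ι(Λ)`, so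
`b(ι μ, x) = μ · b(ι 1, x) = 0`; then each `f ↦ b(f, x)` is left `Λ`-linear and kills `ι(Λ)`.
-/

section IntegerSequences

open Finset Function

theorem AddMonoidHom.map_eq_zero_of_hasFiniteSupport {ι : Type*} [DecidableEq ι] (v : (ι → ℤ) →+ ℤ)
    (hv : ∀ i, v (Pi.single i 1) = 0) {a : ι → ℤ} (ha : HasFiniteSupport a) : v a = 0 := by
  have hsum : a = ∑ i ∈ Set.Finite.toFinset ha, a i • Pi.single i 1 := by
    ext j
    simp only [Finset.sum_apply, Pi.smul_apply, Pi.single_apply, smul_eq_mul, mul_ite, mul_one,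
      mul_zero, Finset.sum_ite_eq]
    split_ifs with h
    · rfl
    · exact not_not.mp fun h' => h ((Set.Finite.mem_toFinset ha).mpr h')
  rw [hsum, map_sum]
  exact Finset.sum_eq_zero fun i _ => by rw [map_zsmul, hv, smul_zero]

theorem AddMonoidHom.map_pow_mul_eq_zero (v : (ℕ → ℤ) →+ ℤ)
    (hv : ∀ n, v (Pi.single n 1) = 0) {m : ℕ} (hm : 2 ≤ m) (x : ℕ → ℤ) :
    v (fun n => (m : ℤ) ^ n * x n) = 0 := by
  have hdvd : ∀ k, (m : ℤ) ^ k ∣ v (fun n => (m : ℤ) ^ n * x n) := by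
    intro k
    have hsplit : (fun n => (m : ℤ) ^ n * x n) =
        (fun n => if n < k then (m : ℤ) ^ n * x n else 0) +
          (m : ℤ) ^ k • fun n => if n < k then 0 else (m : ℤ) ^ (n - k) * x n := by
      ext n
      by_cases hn : n < k
      · simp [hn]
      · simp only [hn, if_false, Pi.add_apply, Pi.smul_apply, smul_eq_mul, zero_add]
        rw [← mul_assoc, ← pow_add, Nat.add_sub_cancel' (not_lt.mp hn)]
    have hhead : (fun n => if n < k then (m : ℤ) ^ n * x n else 0).support.Finite :=
      (Set.finite_lt_nat k).subset fun n hn => by by_contra h; exact hn (if_neg h)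
    rw [hsplit, map_add, map_zsmul, v.map_eq_zero_of_hasFiniteSupport hv hhead, zero_add]
    rw [smul_eq_mul]
    exact dvd_mul_right _ _
  set c := v (fun n => (m : ℤ) ^ n * x n)
  refine Int.eq_zero_of_abs_lt_dvd (hdvd c.natAbs) ?_
  rw [Int.abs_eq_natAbs]
  exact_mod_cast Nat.lt_pow_self (by omega)

theorem AddMonoidHom.eq_zero_of_map_single_eq_zero (v : (ℕ → ℤ) →+ ℤ)
    (hv : ∀ n, v (Pi.single n 1) = 0) : v = 0 := by
  ext a
  have hbezout : ∀ n, ∃ y z : ℤ, a n = 2 ^ n * y + 3 ^ n * z := by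
    intro n
    have hcop : IsCoprime (2 : ℤ) 3 := Int.isCoprime_iff_gcd_eq_one.mpr rfl
    obtain ⟨s, t, h⟩ := hcop.pow (m := n) (n := n)
    exact ⟨s * a n, t * a n, by linear_combination (-a n) * h⟩
  choose y z hyz using hbezout
  have ha : a = (fun n => ((2 : ℕ) : ℤ) ^ n * y n) + fun n => ((3 : ℕ) : ℤ) ^ n * z n := by
    ext n; simp [hyz]
  rw [ha, map_add, v.map_pow_mul_eq_zero hv le_rfl, v.map_pow_mul_eq_zero hv (by norm_num)]
  rfl

theorem AddMonoidHom.map_finsum_mul {X : Type*} (u : (X → ℤ) →+ ℤ) (P : ℕ → X → ℤ)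
    (hP : ∀ x, HasFiniteSupport fun n => P n x) (hu : HasFiniteSupport fun n => u (P n))
    (a : ℕ → ℤ) : u (fun x => ∑ᶠ n, a n * P n x) = ∑ᶠ n, a n * u (P n) := by
  have hdistrib : ∀ (a b c : ℕ → ℤ), HasFiniteSupport c →
      ∑ᶠ n, (a n + b n) * c n = ∑ᶠ n, a n * c n + ∑ᶠ n, b n * c n := fun a b c hc => by
    simp only [add_mul]
    exact finsum_add_distrib (hc.mul_right a) (hc.mul_right b)
  let v : (ℕ → ℤ) →+ ℤ :=
    { toFun := fun a => u (fun x => ∑ᶠ n, a n * P n x) - ∑ᶠ n, a n * u (P n)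
      map_zero' := by
        simp only [Pi.zero_apply, zero_mul, finsum_zero, sub_zero]
        exact map_zero u
      map_add' := fun a b => by
        have hsum : (fun x => ∑ᶠ n, (a n + b n) * P n x) =
            (fun x => ∑ᶠ n, a n * P n x) + fun x => ∑ᶠ n, b n * P n x :=
          funext fun x => hdistrib a b _ (hP x)
        simp only [Pi.add_apply, hsum, map_add, hdistrib a b _ hu]
        abel }
  have hv : v = 0 := v.eq_zero_of_map_single_eq_zero fun m => by
    classical
    have hsingle : ∀ c : ℕ → ℤ, ∑ᶠ n, (Pi.single m 1 : ℕ → ℤ) n * c n = c m := fun c =>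
      (finsum_eq_single _ m fun n hn => by simp [hn]).trans (by simp)
    simp [v, hsingle]
  exact sub_eq_zero.mp (DFunLike.congr_fun hv a)

theorem eq_zero_of_sum_range_pow_mul_eq_zero {N : ℤ} {d : ℕ → ℤ} (hd : ∀ n, |d n| < N) :
    ∀ k, ∑ n ∈ range k, N ^ n * d n = 0 → ∀ n < k, d n = 0 := by
  intro k
  induction k generalizing d with
  | zero => simp
  | succ k ih =>
    intro hsum
    rw [sum_range_succ'] at hsum
    simp only [pow_succ', mul_assoc, ← mul_sum, pow_zero, one_mul] at hsum
    have hd0 : d 0 = 0 :=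
      Int.eq_zero_of_abs_lt_dvd ⟨-∑ n ∈ range k, N ^ n * d (n + 1), by linarith⟩ (hd 0)
    have hN : N ≠ 0 := by have := hd 0; have := abs_nonneg (d 0); omega
    have htail := ih (fun n => hd (n + 1)) (by simpa [hd0, hN] using hsum)
    intro n hn
    cases n with
    | zero => exact hd0
    | succ n => exact htail n (by omega)

theorem finsum_pow_mul_ne_zero {N : ℤ} {d : ℕ → ℤ} (hfin : HasFiniteSupport d)
    (hd : ∀ n, |d n| < N) (hne : d ≠ 0) : ∑ᶠ n, N ^ n * d n ≠ 0 := by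
  obtain ⟨m, hm⟩ := Function.ne_iff.mp hne
  obtain ⟨k, hk⟩ := (hfin.insert m).bddAbove
  have hsub : (fun n => N ^ n * d n).support ⊆ range (k + 1) := fun n hn => by
    simp only [coe_range, Set.mem_Iio]
    have := hk (Set.mem_insert_of_mem m (Function.support_mul_subset_right _ _ hn))
    omega
  rw [finsum_eq_sum_of_support_subset _ hsub]
  have hmk : m < k + 1 := Nat.lt_succ_of_le (hk (Set.mem_insert m _))
  exact fun h => hm (eq_zero_of_sum_range_pow_mul_eq_zero hd _ h m hmk)

end IntegerSequences

section FiniteTranslates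

open Function

theorem Subgroup.exists_countable_infinite (G : Type*) [Group G] [Infinite G] :
    ∃ K : Subgroup G, Countable K ∧ Infinite K := by
  let f := Infinite.natEmbedding G
  refine ⟨(FreeGroup.lift f).range, (FreeGroup.lift f).rangeRestrict_surjective.countable, ?_⟩
  exact Infinite.of_injective (fun n => ⟨f n, FreeGroup.of n, FreeGroup.lift_apply_of⟩)
    fun m n h => f.injective (congrArg Subtype.val h)

variable {G : Type*} [Group G]

def HasFiniteTranslates (u : (G → ℤ) →+ ℤ) : Prop :=
  ∀ F : G → ℤ, {h : G | u (fun x => F (x * h)) ≠ 0}.Finite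

theorem Subgroup.exists_nat_injective_on_cosets (K : Subgroup G) [Countable K] :
    ∃ idx : G → ℕ, ∀ x y, x⁻¹ * y ∈ K → idx x = idx y → x = y := by
  obtain ⟨e, he⟩ := Countable.exists_injective_nat K
  let t : G → G := fun x => (x : G ⧸ K).out
  have ht : ∀ x, (t x)⁻¹ * x ∈ K := fun x => QuotientGroup.eq.mp (QuotientGroup.out_eq' _)
  refine ⟨fun x => e ⟨(t x)⁻¹ * x, ht x⟩, fun x y hxy hidx => ?_⟩
  have htxy : t x = t y := congrArg Quotient.out (QuotientGroup.eq.mpr hxy)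
  have hcoord := congrArg Subtype.val (he hidx)
  simp only [htxy] at hcoord
  exact mul_left_cancel hcoord

theorem HasFiniteTranslates.map_eq_zero_of_transversal {u : (G → ℤ) →+ ℤ}
    (hu : HasFiniteTranslates u) (K : Subgroup G) [Countable K] [Infinite K] (P : G → ℤ)
    (hP : ∀ x y, x⁻¹ * y ∈ K → P x ≠ 0 → P y ≠ 0 → x = y) : u P = 0 := by
  by_contra hP0
  obtain ⟨e⟩ := nonempty_equiv_of_countable (α := ℕ) (β := K)
  let c : G → ℤ := fun h => u (fun x => P (x * h))
  let T := (hu P).toFinset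
  let N : ℤ := 1 + ∑ h ∈ T, |c h|
  have hN : ∀ h, |c h| < N := fun h => by
    by_cases hh : h ∈ T
    · have := Finset.single_le_sum (f := fun h => |c h|) (fun _ _ => abs_nonneg _) hh
      simp only [N]; linarith
    · have hch : c h = 0 := by simpa [T] using hh
      have := Finset.sum_nonneg (s := T) fun h _ => abs_nonneg (c h)
      simp only [N, hch, abs_zero]; linarith
  let Q : G → ℕ → G → ℤ := fun κ n x => P (x * (κ * e n))
  have hQ : ∀ κ x, HasFiniteSupport fun n => Q κ n x := fun κ x =>
    Set.Subsingleton.finite fun m hm n hn => e.injective <| Subtype.ext <| mul_left_cancel <|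
      mul_left_cancel <| hP _ _
        (by simpa [mul_assoc] using K.mul_mem (K.inv_mem (e m).2) (e n).2) hm hn
  have huQ : ∀ κ, HasFiniteSupport fun n => u (Q κ n) := fun κ =>
    (hu P).preimage fun m _ n _ h => e.injective <| Subtype.ext <| mul_left_cancel h
  let R : G → ℤ := fun x => ∑ᶠ n, N ^ n * P (x * e n)
  have hR : ∀ κ ∈ K, u (fun x => R (x * κ)) ≠ 0 := by
    intro κ hκ
    have hRκ : (fun x => R (x * κ)) = fun x => ∑ᶠ n, N ^ n * Q κ n x := by
      simp only [R, Q, mul_assoc]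
    rw [hRκ, u.map_finsum_mul _ (hQ κ) (huQ κ)]
    refine finsum_pow_mul_ne_zero (huQ κ) (fun n => hN _) fun h0 => hP0 ?_
    obtain ⟨n, hn⟩ := e.surjective ⟨κ⁻¹, K.inv_mem hκ⟩
    have := congrFun h0 n
    simpa [Q, hn] using this
  exact Set.Infinite.mono hR (Set.infinite_coe_iff.mp ‹Infinite K›) (hu R)

theorem HasFiniteTranslates.eq_zero {u : (G → ℤ) →+ ℤ} (hu : HasFiniteTranslates u)
    (h0 : ∀ F : G → ℤ, HasFiniteSupport F → u F = 0) : u = 0 := by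
  refine DFunLike.ext _ _ fun F => ?_
  rcases finite_or_infinite G with hG | hG
  · exact h0 F (Set.toFinite _)
  obtain ⟨K, hKc, hKi⟩ := Subgroup.exists_countable_infinite G
  obtain ⟨idx, hidx⟩ := K.exists_nat_injective_on_cosets
  let P : ℕ → G → ℤ := fun n x => if idx x = n then F x else 0
  have hP : ∀ n, u (P n) = 0 := fun n => hu.map_eq_zero_of_transversal K (P n)
    fun x y hxy hx hy => hidx x y hxy <| by
      simp only [P, ne_eq, ite_eq_right_iff, not_forall] at hx hy
      rw [hx.1, hy.1]
  have hPfin : ∀ x, HasFiniteSupport fun n => P n x := fun x =>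
    (Set.finite_singleton (idx x)).subset fun n hn => by
      by_contra h; exact hn (if_neg (Ne.symm h))
  have hF : F = fun x => ∑ᶠ n, 1 * P n x := funext fun x => by
    rw [finsum_eq_single _ (idx x) fun n hn => by simp [P, Ne.symm hn]]
    simp [P]
  rw [hF, u.map_finsum_mul P hPfin (by simp [hP, HasFiniteSupport])]
  simp [hP]

end FiniteTranslates

open MulOpposite

noncomputable section

abbrev Lam (G : Type) [Group G] : Type := MonoidAlgebra ℤ G
abbrev LamHat (G : Type) [Group G] : Type := Module.Dual ℤ (Lam G)

variable (G : Type) [Group G]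

instance instRSMul : SMul (Lam G)ᵐᵒᵖ (LamHat G) :=
  ⟨fun a f =>
    { toFun := fun x => f (a.unop * x)
      map_add' := fun x y => by show f (a.unop * (x + y)) = _; rw [mul_add, map_add]
      map_smul' := fun m x => by
        show f (a.unop * (m • x)) = m • f (a.unop * x)
        rw [mul_smul_comm, map_smul] }⟩

@[simp] lemma rsmul_apply (a : (Lam G)ᵐᵒᵖ) (f : LamHat G) (x : Lam G) :
    (a • f) x = f (a.unop * x) := rfl

instance instRMod : Module (Lam G)ᵐᵒᵖ (LamHat G) where
  one_smul f := LinearMap.ext fun x => by simp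
  mul_smul a b f := LinearMap.ext fun x => by simp [mul_assoc]
  smul_zero a := LinearMap.ext fun x => by simp
  smul_add a f g := LinearMap.ext fun x => by simp
  add_smul a b f := LinearMap.ext fun x => by simp [add_mul]
  zero_smul f := LinearMap.ext fun x => by simp

instance instLSMul : SMul (Lam G) (LamHat G) :=
  ⟨fun a f =>
    { toFun := fun x => f (x * a)
      map_add' := fun x y => by show f ((x + y) * a) = _; rw [add_mul, map_add]
      map_smul' := fun m x => by
        show f ((m • x) * a) = m • f (x * a)
        rw [smul_mul_assoc, map_smul] }⟩

@[simp] lemma lsmul_apply (a : Lam G) (f : LamHat G) (x : Lam G) :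
    (a • f) x = f (x * a) := rfl

instance instLMod : Module (Lam G) (LamHat G) where
  one_smul f := LinearMap.ext fun x => by simp
  mul_smul a b f := LinearMap.ext fun x => by simp [mul_assoc]
  smul_zero a := LinearMap.ext fun x => by simp
  smul_add a f g := LinearMap.ext fun x => by simp
  add_smul a b f := LinearMap.ext fun x => by simp [mul_add]
  zero_smul f := LinearMap.ext fun x => by simp

def iota : Lam G →ₗ[ℤ] LamHat G where
  toFun μ :=
    { toFun := fun x => (x * μ).coeff 1
      map_add' := fun x y => by
        show ((x + y) * μ).coeff 1 = (x * μ).coeff 1 + (y * μ).coeff 1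
        rw [add_mul]; exact Finsupp.add_apply _ _ _
      map_smul' := fun m x => by
        show ((m • x) * μ).coeff 1 = m • ((x * μ).coeff 1)
        rw [smul_mul_assoc]; exact Finsupp.smul_apply _ _ _ }
  map_add' μ ν := LinearMap.ext fun x => by
    show (x * (μ + ν)).coeff 1 = (x * μ).coeff 1 + (x * ν).coeff 1
    rw [mul_add]; exact Finsupp.add_apply _ _ _
  map_smul' m μ := LinearMap.ext fun x => by
    show (x * (m • μ)).coeff 1 = m • ((x * μ).coeff 1)
    rw [mul_smul_comm]; exact Finsupp.smul_apply _ _ _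

def iotaL : Lam G →ₗ[Lam G] LamHat G where
  toFun μ := iota G μ
  map_add' μ ν := map_add _ _ _
  map_smul' a μ := LinearMap.ext fun x => by
    show (x * (a • μ)).coeff 1 = (iota G μ) (x * a)
    rw [smul_eq_mul, ← mul_assoc]; rfl

def aug : LamHat G := ((MonoidAlgebra.lift ℤ ℤ G) 1).toLinearMap

@[simp] lemma iotaL_apply (μ : Lam G) : iotaL G μ = iota G μ := rfl

def LamHat.ofFun : (G → ℤ) ≃ₗ[ℤ] LamHat G := (MonoidAlgebra.basis G ℤ).constr ℤ

lemma LamHat.single_smul_ofFun (F : G → ℤ) (h : G) :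
    (MonoidAlgebra.single h 1 : Lam G) • LamHat.ofFun G F = LamHat.ofFun G (fun x => F (x * h)) :=
  (MonoidAlgebra.basis G ℤ).ext fun g => by
    rw [lsmul_apply, MonoidAlgebra.basis_apply, MonoidAlgebra.single_mul_single, mul_one,
      ← MonoidAlgebra.basis_apply, ← MonoidAlgebra.basis_apply, LamHat.ofFun,
      Module.Basis.constr_basis, Module.Basis.constr_basis]

lemma LamHat.ofFun_single [DecidableEq G] (g : G) :
    LamHat.ofFun G (Pi.single g 1) = iota G (MonoidAlgebra.single g⁻¹ 1) :=
  (MonoidAlgebra.basis G ℤ).ext fun g' => by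
    rw [LamHat.ofFun, Module.Basis.constr_basis]
    simp [iota, Pi.single_apply, Finsupp.single_apply]

lemma op_smul_iota_one (s : Lam G) : op s • iota G 1 = iota G s :=
  (MonoidAlgebra.basis G ℤ).ext fun g => by simp [iota]

lemma smul_iota_one (s : Lam G) : s • iota G 1 = iota G s := by
  simpa using ((iotaL G).map_smul s 1).symm

theorem LamHat.addMonoidHom_eq_zero (u : LamHat G →+ ℤ) (h0 : ∀ μ, u (iota G μ) = 0)
    (h1 : ∀ f, {h : G | u ((MonoidAlgebra.single h 1 : Lam G) • f) ≠ 0}.Finite) : u = 0 := by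
  classical
  let u' : (G → ℤ) →+ ℤ := u.comp (LamHat.ofFun G).toAddMonoidHom
  have hu' : u' = 0 := HasFiniteTranslates.eq_zero
    (fun F => by simpa [u', LamHat.single_smul_ofFun] using h1 (LamHat.ofFun G F))
    fun F hF => u'.map_eq_zero_of_hasFiniteSupport
      (fun g => by simp [u', LamHat.ofFun_single, h0]) hF
  ext f
  simpa [u'] using DFunLike.congr_fun hu' ((LamHat.ofFun G).symm f)

theorem eq_zero_of_comp_iotaL_eq_zero (φ : LamHat G →ₗ[Lam G] Lam G) (hφ : φ ∘ₗ iotaL G = 0) :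
    φ = 0 := by
  let u : LamHat G →+ ℤ := AddMonoidHom.mk' (fun f => (φ f).coeff 1) fun f g => by simp
  have hu : ∀ h f, u ((MonoidAlgebra.single h 1 : Lam G) • f) = (φ f).coeff h⁻¹ := by
    simp [u, MonoidAlgebra.coeff_single_mul_apply]
  have h0 : ∀ μ, u (iota G μ) = 0 := fun μ => by
    simpa [u] using congrArg (fun ψ => (ψ μ).coeff 1) hφ
  have hu0 := LamHat.addMonoidHom_eq_zero G u h0 fun f => by
    simp_rw [hu]
    exact (φ f).coeff.hasFiniteSupport.preimage inv_injective.injOn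
  ext f : 1
  refine MonoidAlgebra.coeff_injective (Finsupp.ext fun g => ?_)
  simpa [hu] using DFunLike.congr_fun hu0 ((MonoidAlgebra.single g⁻¹ 1 : Lam G) • f)

/-- For `Λ = ℤ[G]`, any `Λ`-balanced biadditive map
`b : Λ̂ × (Λ̂/Λ) → Λ` which is left `Λ`-linear in the first variable is
identically zero.  Here `Λ̂ = Hom_ℤ(Λ, ℤ)` is the coinduced `(Λ,Λ)`-bimodule,
`Λ ⊆ Λ̂` is the range of the canonical inclusion `ι`, `Λ̂/Λ` is the quotient
left `Λ`-module, and `Λ`-balanced means `b(λ̂·s, x) = b(λ̂, s·x)`. -/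
theorem stmt15 (G : Type) [Group G]
    (b : LamHat G →+ ((LamHat G ⧸ LinearMap.range (iotaL G)) →+ Lam G))
    (hlin : ∀ (r : Lam G) (f : LamHat G) (x : LamHat G ⧸ LinearMap.range (iotaL G)),
      b (r • f) x = r * b f x)
    (hbal : ∀ (s : Lam G) (f : LamHat G) (x : LamHat G ⧸ LinearMap.range (iotaL G)),
      b (op s • f) x = b f (s • x)) :
    b = 0 := by
  have hb_iota_one : ∀ x, b (iota G 1) x = 0 := by
    let φ : LamHat G →ₗ[Lam G] Lam G :=
      { toFun := fun f => b (iota G 1) (Submodule.Quotient.mk f)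
        map_add' := fun f g => by simp
        map_smul' := fun r f => by
          rw [Submodule.Quotient.mk_smul, ← hbal, op_smul_iota_one, ← smul_iota_one, hlin]
          rfl }
    have hφ := eq_zero_of_comp_iotaL_eq_zero G φ <| LinearMap.ext fun μ => by
      show b (iota G 1) (Submodule.Quotient.mk (iotaL G μ)) = 0
      rw [(Submodule.Quotient.mk_eq_zero _).mpr (LinearMap.mem_range_self _ μ), map_zero]
    intro x
    obtain ⟨f, rfl⟩ := Submodule.Quotient.mk_surjective _ x
    exact LinearMap.congr_fun hφ f
  ext f x : 2
  let φ : LamHat G →ₗ[Lam G] Lam G :=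
    { toFun := fun f => b f x
      map_add' := fun f g => by simp
      map_smul' := fun r f => hlin r f x }
  have hφ : φ ∘ₗ iotaL G = 0 := LinearMap.ext fun μ => by
    show b (iota G μ) x = 0
    rw [← smul_iota_one, hlin, hb_iota_one, mul_zero]
  exact LinearMap.congr_fun (eq_zero_of_comp_iotaL_eq_zero G φ hφ) f
end
end

section
/- Let G be a countable group, Λ = ℤ[G] and Λ̂ = Hom_ℤ(Λ, ℤ). Then the restriction map Hom_ℤ(Λ̂, ℤ) → Hom_ℤ(Λ, ℤ) ≅ Λ̂ (restriction along Λ ⊆ Λ̂) is injective, with image equal to the submodule Λ of finitely supported functions. -/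
open MulOpposite

noncomputable section

variable (G : Type) [Group G]

namespace Specker

noncomputable section
open Classical

def e (n : ℕ) : ℕ → ℤ := Pi.single n 1

def head (k : ℕ) (f : ℕ → ℤ) : ℕ → ℤ := fun m => if m < k then f m else 0
def tail (k : ℕ) (f : ℕ → ℤ) : ℕ → ℤ := fun m => if m < k then 0 else f m

lemma head_add_tail (k : ℕ) (f : ℕ → ℤ) : head k f + tail k f = f := by
  funext m; simp [head, tail]; split <;> simp

lemma head_eq_sum (k : ℕ) (f : ℕ → ℤ) :
    head k f = ∑ m ∈ Finset.range k, f m • e m := by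
  funext x
  simp only [Finset.sum_apply, Pi.smul_apply, e, Pi.single_apply, smul_eq_mul,
    mul_ite, mul_one, mul_zero, Finset.sum_ite_eq, Finset.mem_range, head]

variable (Φ : (ℕ → ℤ) →+ ℤ)

lemma phi_head (k : ℕ) (f : ℕ → ℤ) :
    Φ (head k f) = ∑ m ∈ Finset.range k, f m * Φ (e m) := by
  rw [head_eq_sum, map_sum]
  exact Finset.sum_congr rfl fun m _ => by rw [map_zsmul, smul_eq_mul]

lemma dvd_phi (D : ℤ) (f : ℕ → ℤ) (h : ∀ m, D ∣ f m) : D ∣ Φ f := by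
  refine ⟨Φ (fun m => f m / D), ?_⟩
  have : f = D • (fun m => f m / D) := by
    funext m; simp only [Pi.smul_apply, smul_eq_mul]
    exact (Int.mul_ediv_cancel' (h m)).symm
  conv_lhs => rw [this, map_zsmul, smul_eq_mul]

lemma eq_zero_of_pow_dvd (p : ℤ) (hp : 2 ≤ p) (x : ℤ) (h : ∀ k : ℕ, p ^ k ∣ x) :
    x = 0 := by
  by_contra hx
  have h1 := Int.le_of_dvd (abs_pos.2 hx) ((h x.natAbs).trans ((dvd_abs x x).2 dvd_rfl))
  have h2 : (x.natAbs : ℤ) < p ^ x.natAbs := by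
    calc (x.natAbs : ℤ) < 2 ^ x.natAbs := by exact_mod_cast (Nat.lt_two_pow_self (n := x.natAbs))
    _ ≤ p ^ x.natAbs := pow_le_pow_left₀ (by norm_num) hp _
  rw [Int.abs_eq_natAbs] at h1
  omega

lemma phi_zero_of_pow (p : ℤ) (hp : 2 ≤ p) (f : ℕ → ℤ)
    (hf : ∀ m, p ^ m ∣ f m) (he : ∀ n, Φ (e n) = 0) : Φ f = 0 := by
  refine eq_zero_of_pow_dvd p hp _ fun k => ?_
  have : Φ f = Φ (head k f) + Φ (tail k f) := by rw [← map_add, head_add_tail]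
  rw [this, phi_head]
  have h1 : ∑ m ∈ Finset.range k, f m * Φ (e m) = 0 :=
    Finset.sum_eq_zero fun m _ => by rw [he m, mul_zero]
  rw [h1, zero_add]
  refine dvd_phi Φ _ _ fun m => ?_
  simp only [tail]
  split
  · exact dvd_zero _
  · exact dvd_trans (pow_dvd_pow p (by omega)) (hf m)

lemma lemmaA (he : ∀ n, Φ (e n) = 0) (f : ℕ → ℤ) : Φ f = 0 := by
  have hc : ∀ n : ℕ, ∃ u v : ℤ, f n = u * 2 ^ n + v * 3 ^ n := by
    intro n
    have : IsCoprime ((2:ℤ) ^ n) (3 ^ n) := (by norm_num : IsCoprime (2:ℤ) 3).pow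
    obtain ⟨a, b, hab⟩ := this
    exact ⟨f n * a, f n * b, by linear_combination f n * hab.symm⟩
  choose u v huv using hc
  have : f = (fun n => u n * 2 ^ n) + (fun n => v n * 3 ^ n) := funext fun n => huv n
  rw [this, map_add]
  rw [phi_zero_of_pow Φ 2 le_rfl _ (fun m => ⟨u m, mul_comm _ _⟩) he,
      phi_zero_of_pow Φ 3 (by norm_num) _ (fun m => ⟨v m, mul_comm _ _⟩) he, add_zero]


section LemmaB

variable (hS : {n : ℕ | Φ (e n) ≠ 0}.Infinite)

/-- pick an element of S that is > k -/
def pick (k : ℕ) : ℕ := (hS.exists_gt k).choose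

lemma pick_ne (k : ℕ) : Φ (e (pick Φ hS k)) ≠ 0 := (hS.exists_gt k).choose_spec.1

lemma pick_gt (k : ℕ) : k < pick Φ hS k := (hS.exists_gt k).choose_spec.2

/-- recursion producing (k_j, s_j) -/
def F : ℕ → ℕ × ℤ
  | 0 => (0, 0)
  | j + 1 =>
    let k := (F j).1
    let n := pick Φ hS k
    let s' := (F j).2 + 2 ^ n * |Φ (e n)|
    ((2 * s').toNat + n + 1, s')

def kk (j : ℕ) : ℕ := (F Φ hS j).1
def ss (j : ℕ) : ℤ := (F Φ hS j).2
def nn (j : ℕ) : ℕ := pick Φ hS (kk Φ hS j)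

lemma kk_zero : kk Φ hS 0 = 0 := rfl
lemma ss_zero : ss Φ hS 0 = 0 := rfl
lemma ss_succ (j : ℕ) :
    ss Φ hS (j + 1) = ss Φ hS j + 2 ^ (nn Φ hS j) * |Φ (e (nn Φ hS j))| := rfl
lemma kk_succ (j : ℕ) :
    kk Φ hS (j + 1) = (2 * ss Φ hS (j + 1)).toNat + nn Φ hS j + 1 := rfl

lemma nn_gt (j : ℕ) : kk Φ hS j < nn Φ hS j := pick_gt Φ hS _
lemma nn_ne (j : ℕ) : Φ (e (nn Φ hS j)) ≠ 0 := pick_ne Φ hS _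

lemma nn_lt_kk_succ (j : ℕ) : nn Φ hS j < kk Φ hS (j + 1) := by
  rw [kk_succ]; omega

lemma kk_lt (j : ℕ) : kk Φ hS j < kk Φ hS (j + 1) :=
  (nn_gt Φ hS j).trans (nn_lt_kk_succ Φ hS j)

lemma kk_mono : StrictMono (kk Φ hS) := strictMono_nat_of_lt_succ (kk_lt Φ hS)

lemma kk_ge (j : ℕ) : j ≤ kk Φ hS j := by
  induction j with
  | zero => omega
  | succ j ih => have := kk_lt Φ hS j; omega

lemma ss_lt_succ (j : ℕ) : ss Φ hS j + 1 ≤ ss Φ hS (j + 1) := by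
  rw [ss_succ]
  have h1 : (1:ℤ) ≤ |Φ (e (nn Φ hS j))| := by
    have := abs_pos.2 (nn_ne Φ hS j); omega
  have h2 : (1:ℤ) ≤ 2 ^ (nn Φ hS j) := one_le_pow₀ one_le_two
  nlinarith

lemma ss_ge (j : ℕ) : (j : ℤ) ≤ ss Φ hS j := by
  induction j with
  | zero => simp [ss_zero]
  | succ j ih => have := ss_lt_succ Φ hS j; push_cast; omega

lemma two_ss_lt (j : ℕ) : 2 * ss Φ hS j < 2 ^ (kk Φ hS j) := by
  cases j with
  | zero => simp [ss_zero, kk_zero]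
  | succ j =>
    have h0 : (0:ℤ) ≤ ss Φ hS (j+1) := by have := ss_ge Φ hS (j+1); omega
    have h1 : 2 * ss Φ hS (j+1) = ((2 * ss Φ hS (j+1)).toNat : ℤ) := by omega
    rw [h1]
    calc ((2 * ss Φ hS (j+1)).toNat : ℤ) < 2 ^ (2 * ss Φ hS (j+1)).toNat := by
          exact_mod_cast Nat.lt_two_pow_self
    _ ≤ 2 ^ kk Φ hS (j+1) := by
          apply pow_le_pow_right₀ one_le_two
          rw [kk_succ]; omega

/-- the diagonal element -/
def xx : ℕ → ℤ := fun m =>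
  if m ∈ Set.range (nn Φ hS) then 2 ^ m * Int.sign (Φ (e m)) else 0

lemma xx_dvd (m : ℕ) : (2:ℤ) ^ m ∣ xx Φ hS m := by
  unfold xx; split
  · exact Dvd.intro _ rfl
  · exact dvd_zero _

lemma xx_eq_zero {m : ℕ} (h : ∀ j, nn Φ hS j ≠ m) : xx Φ hS m = 0 := by
  unfold xx
  rw [if_neg]
  rintro ⟨j, hj⟩
  exact h j hj

lemma xx_mul (j : ℕ) :
    xx Φ hS (nn Φ hS j) * Φ (e (nn Φ hS j)) =
      2 ^ (nn Φ hS j) * |Φ (e (nn Φ hS j))| := by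
  unfold xx
  rw [if_pos ⟨j, rfl⟩, mul_assoc]
  congr 1
  rw [mul_comm, Int.abs_eq_natAbs]
  exact Int.mul_sign_self _

lemma nn_strictMono : StrictMono (nn Φ hS) :=
  strictMono_nat_of_lt_succ fun j =>
    (nn_lt_kk_succ Φ hS j).trans (nn_gt Φ hS (j+1))

lemma head_sum (j : ℕ) :
    ∑ m ∈ Finset.range (kk Φ hS j), xx Φ hS m * Φ (e m) = ss Φ hS j := by
  induction j with
  | zero => simp [kk_zero, ss_zero]
  | succ j ih =>
    rw [Finset.range_eq_Ico, ← Finset.sum_Ico_consecutive _ (Nat.zero_le _)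
      (kk_lt Φ hS j).le, ← Finset.range_eq_Ico, ih, ss_succ]
    congr 1
    rw [Finset.sum_eq_single_of_mem (nn Φ hS j)
      (Finset.mem_Ico.2 ⟨(nn_gt Φ hS j).le, nn_lt_kk_succ Φ hS j⟩)]
    · exact xx_mul Φ hS j
    · intro m hm hne
      rw [Finset.mem_Ico] at hm
      rw [xx_eq_zero Φ hS, zero_mul]
      intro i hi
      rcases lt_trichotomy i j with h | h | h
      · have : nn Φ hS i < kk Φ hS (i + 1) := nn_lt_kk_succ Φ hS i
        have : kk Φ hS (i + 1) ≤ kk Φ hS j := (kk_mono Φ hS).le_iff_le.2 h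
        omega
      · exact hne (h ▸ hi).symm
      · have : kk Φ hS (j + 1) ≤ kk Φ hS i := (kk_mono Φ hS).le_iff_le.2 h
        have : kk Φ hS i < nn Φ hS i := nn_gt Φ hS i
        omega

lemma key_congruence (j : ℕ) :
    (2:ℤ) ^ (kk Φ hS j) ∣ Φ (xx Φ hS) - ss Φ hS j := by
  have hsplit : Φ (xx Φ hS) = Φ (head (kk Φ hS j) (xx Φ hS)) + Φ (tail (kk Φ hS j) (xx Φ hS)) := by
    rw [← map_add, head_add_tail]
  rw [hsplit, phi_head, head_sum, add_sub_cancel_left]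
  refine dvd_phi Φ _ _ fun m => ?_
  simp only [tail]
  split
  · exact dvd_zero _
  · exact dvd_trans (pow_dvd_pow 2 (by omega)) (xx_dvd Φ hS m)

include hS in
lemma lemmaB : False := by
  set N := Φ (xx Φ hS) with hN
  set j := 2 * N.natAbs + 2 with hj
  have hk : 2 * N.natAbs + 2 ≤ kk Φ hS j := hj ▸ kk_ge Φ hS j
  have hMbig : 2 * |N| < 2 ^ (kk Φ hS j) := by
    calc 2 * |N| ≤ 2 * (N.natAbs : ℤ) := by rw [Int.abs_eq_natAbs]
    _ < ((2 * N.natAbs + 2 : ℕ) : ℤ) := by push_cast; omega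
    _ < 2 ^ (2 * N.natAbs + 2) := by exact_mod_cast Nat.lt_two_pow_self
    _ ≤ 2 ^ (kk Φ hS j) := pow_le_pow_right₀ one_le_two hk
  have hs_gt : N < ss Φ hS j := by
    have h1 := ss_ge Φ hS j
    have : N ≤ |N| := le_abs_self N
    have : |N| = (N.natAbs : ℤ) := Int.abs_eq_natAbs N
    push_cast at h1
    omega
  have hs_lt : ss Φ hS j - N < 2 ^ (kk Φ hS j) := by
    have h1 := two_ss_lt Φ hS j
    have h2 : -N ≤ |N| := neg_le_abs N
    omega
  have hdvd := key_congruence Φ hS j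
  have hdvd' : (2:ℤ) ^ (kk Φ hS j) ∣ ss Φ hS j - N := by
    have : ss Φ hS j - N = -(N - ss Φ hS j) := by ring
    rw [this]
    exact (hdvd).neg_right
  have := Int.le_of_dvd (by omega) hdvd'
  omega

end LemmaB

theorem specker : ∃ T : Finset ℕ, ∀ f, Φ f = ∑ n ∈ T, f n * Φ (e n) := by
  have hfin : {n : ℕ | Φ (e n) ≠ 0}.Finite := by
    by_contra h
    exact lemmaB Φ h
  refine ⟨hfin.toFinset, fun f => ?_⟩
  set Ψ : (ℕ → ℤ) →+ ℤ :=
    ∑ n ∈ hfin.toFinset, (Φ (e n)) • (Pi.evalAddMonoidHom (fun _ : ℕ => ℤ) n) with hΨ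
  have hΨ_apply : ∀ g : ℕ → ℤ, Ψ g = ∑ n ∈ hfin.toFinset, Φ (e n) * g n := by
    intro g
    rw [hΨ, AddMonoidHom.finset_sum_apply]
    rfl
  have hdiff : ∀ m, (Φ - Ψ) (e m) = 0 := by
    intro m
    simp only [AddMonoidHom.sub_apply, hΨ_apply]
    by_cases hm : m ∈ hfin.toFinset
    · rw [Finset.sum_eq_single_of_mem m hm]
      · simp [e]
      · intro n _ hne
        simp [e, Pi.single_apply, hne]
    · have h1 : Φ (e m) = 0 := by
        simpa using (Set.Finite.mem_toFinset hfin).not.1 hm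
      rw [h1]
      rw [Finset.sum_eq_zero, sub_zero]
      intro n hn
      have : n ≠ m := by rintro rfl; exact hm hn
      simp [e, Pi.single_apply, this]
  have := lemmaA (Φ - Ψ) hdiff f
  simp only [AddMonoidHom.sub_apply, sub_eq_zero] at this
  rw [this, hΨ_apply]
  exact Finset.sum_congr rfl fun n _ => mul_comm _ _

section CountableSpecker

variable {G : Type} [Countable G]

open Classical in
def eg (g : G) : G → ℤ := Pi.single g 1

theorem speckerG (Φ : (G → ℤ) →+ ℤ) :
    ∃ T : Finset G, ∀ f : G → ℤ, Φ f = ∑ g ∈ T, f g * Φ (eg g) := by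
  classical
  obtain ⟨emb, hemb⟩ := Countable.exists_injective_nat G
  set P : (ℕ → ℤ) →+ (G → ℤ) :=
    { toFun := fun h => fun g => h (emb g)
      map_zero' := rfl
      map_add' := fun a b => rfl } with hP
  obtain ⟨T', hT'⟩ := specker (Φ.comp P)
  refine ⟨T'.preimage emb hemb.injOn, fun f => ?_⟩
  set ft : ℕ → ℤ := fun n => if h : ∃ g, emb g = n then f h.choose else 0 with hft
  have hft' : ∀ g : G, ft (emb g) = f g := by
    intro g
    rw [hft]
    dsimp only
    rw [dif_pos ⟨g, rfl⟩]
    congr 1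
    exact hemb (⟨g, rfl⟩ : ∃ g', emb g' = emb g).choose_spec
  have hPft : P ft = f := funext fun g => hft' g
  have h1 : Φ f = ∑ n ∈ T', ft n * (Φ.comp P) (e n) := by
    rw [← hPft]; exact hT' ft
  rw [h1, ← Finset.sum_preimage emb T' hemb.injOn
    (fun n => ft n * (Φ.comp P) (e n)) ?_]
  · refine Finset.sum_congr rfl fun g _ => ?_
    have hPe : P (e (emb g)) = eg g := by
      funext g''
      simp [hP, e, eg, Pi.single_apply, hemb.eq_iff]
    rw [hft' g, AddMonoidHom.comp_apply, hPe]
  · intro n _ hn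
    have hzero : P (e n) = 0 := by
      funext g
      simp only [hP, AddMonoidHom.coe_mk, ZeroHom.coe_mk, e, Pi.single_apply,
        Pi.zero_apply]
      rw [if_neg]
      exact fun h => hn ⟨g, h⟩
    show ft n * (Φ.comp P) (e n) = 0
    rw [AddMonoidHom.comp_apply, hzero, map_zero, mul_zero]

end CountableSpecker

end
end Specker


namespace SpeckerAux

variable {G : Type} [Group G]

def delta (g : G) : LamHat G := iota G (MonoidAlgebra.single g⁻¹ 1)

lemma delta_apply (g : G) (x : Lam G) : delta g x = x.coeff g := by
  show ((x * MonoidAlgebra.single g⁻¹ 1 : MonoidAlgebra ℤ G)).coeff 1 = x.coeff g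
  rw [MonoidAlgebra.mul_single_apply]; simp

lemma single_eq_smul (g : G) (c : ℤ) :
    (MonoidAlgebra.single g c : Lam G) = c • MonoidAlgebra.single g 1 := by
  rw [MonoidAlgebra.smul_single]; simp

def liftHom : (G → ℤ) →+ LamHat G where
  toFun a := (Finsupp.linearCombination ℤ a).comp (MonoidAlgebra.coeffLinearEquiv ℤ).toLinearMap
  map_zero' := by
    apply LinearMap.ext; intro x
    show Finsupp.linearCombination ℤ (0 : G → ℤ) x.coeff = 0
    simp [Finsupp.linearCombination_apply, Finsupp.sum]
  map_add' a b := by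
    apply LinearMap.ext; intro x
    show Finsupp.linearCombination ℤ (a + b) x.coeff
      = Finsupp.linearCombination ℤ a x.coeff + Finsupp.linearCombination ℤ b x.coeff
    simp [Finsupp.linearCombination_apply, Finsupp.sum, mul_add,
      Finset.sum_add_distrib]

lemma liftHom_single (a : G → ℤ) (g : G) (c : ℤ) :
    liftHom a (MonoidAlgebra.single g c) = c * a g := by
  show Finsupp.linearCombination ℤ a (Finsupp.single g c) = c * a g
  rw [Finsupp.linearCombination_single, smul_eq_mul]

lemma lift_eg (g : G) : liftHom (Specker.eg g) = delta g := by
  classical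
  refine LinearMap.toAddMonoidHom_injective (MonoidAlgebra.addMonoidHom_ext fun a b => ?_)
  show Finsupp.linearCombination ℤ (Specker.eg g) (Finsupp.single a b)
    = delta g (MonoidAlgebra.single a b)
  rw [Finsupp.linearCombination_single, delta_apply, MonoidAlgebra.single_apply,
    Specker.eg, Pi.single_apply, smul_eq_mul]
  by_cases hag : a = g <;> simp [hag]

lemma lift_pi (h : LamHat G) :
    liftHom (fun g => h (MonoidAlgebra.single g 1)) = h := by
  refine LinearMap.toAddMonoidHom_injective (MonoidAlgebra.addMonoidHom_ext fun a b => ?_)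
  show Finsupp.linearCombination ℤ (fun g => h (MonoidAlgebra.single g 1))
      (Finsupp.single a b)
    = h (MonoidAlgebra.single a b)
  rw [Finsupp.linearCombination_single, smul_eq_mul]
  conv_rhs => rw [show (MonoidAlgebra.single a b : Lam G) = b • MonoidAlgebra.single a 1
    from single_eq_smul a b]
  rw [map_smul, smul_eq_mul]

lemma reprPhi [Countable G] (Φ : LamHat G →+ ℤ) :
    ∃ T : Finset G, ∀ h : LamHat G,
      Φ h = ∑ g ∈ T, h (MonoidAlgebra.single g 1) * Φ (delta g) := by
  obtain ⟨T, hT⟩ := Specker.speckerG (Φ.comp liftHom)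
  refine ⟨T, fun h => ?_⟩
  have h1 := hT (fun g => h (MonoidAlgebra.single g 1))
  rw [AddMonoidHom.comp_apply, lift_pi] at h1
  rw [h1]
  exact Finset.sum_congr rfl fun g _ => by
    rw [AddMonoidHom.comp_apply, lift_eg]

lemma repr_zero (Φ : LamHat G →+ ℤ) {T : Finset G}
    (hrepr : ∀ h : LamHat G,
      Φ h = ∑ g ∈ T, h (MonoidAlgebra.single g 1) * Φ (delta g))
    {g : G} (hg : g ∉ T) : Φ (delta g) = 0 := by
  classical
  rw [hrepr (delta g)]
  refine Finset.sum_eq_zero fun g' hg' => ?_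
  rw [delta_apply, MonoidAlgebra.single_apply,
    if_neg (fun e : g' = g => hg (e ▸ hg')), zero_mul]

lemma repr_subset (Φ : LamHat G →+ ℤ) {T T' : Finset G}
    (hrepr : ∀ h : LamHat G,
      Φ h = ∑ g ∈ T, h (MonoidAlgebra.single g 1) * Φ (delta g))
    (hTT' : T ⊆ T') (h : LamHat G) :
    Φ h = ∑ g ∈ T', h (MonoidAlgebra.single g 1) * Φ (delta g) := by
  rw [hrepr h]
  exact Finset.sum_subset hTT' fun g _ hg => by
    rw [repr_zero Φ hrepr hg, mul_zero]

def evalAt (v : Lam G) : LamHat G →+ ℤ where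
  toFun h := h v
  map_zero' := rfl
  map_add' _ _ := rfl

end SpeckerAux

open SpeckerAux in
/-- For a countable group `G` with `Λ = ℤ[G]` and
`Λ̂ = Hom_ℤ(Λ, ℤ)`, the restriction map `Hom_ℤ(Λ̂, ℤ) → Hom_ℤ(Λ, ℤ) ≅ Λ̂`
(restriction along the inclusion `ι : Λ ⊆ Λ̂`) is injective, with image equal
to the submodule `Λ ⊆ Λ̂` of finitely supported functions, i.e. the range of
`ι`.  In particular every finitely generated submodule of `Λ̂` contained in
this image has finite support. -/
theorem stmt18 (G : Type) [Group G] [Countable G] :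
    Function.Injective
      (fun Φ : LamHat G →+ ℤ =>
        ((Φ.comp (iota G).toAddMonoidHom).toIntLinearMap : LamHat G)) ∧
    Set.range
      (fun Φ : LamHat G →+ ℤ =>
        ((Φ.comp (iota G).toAddMonoidHom).toIntLinearMap : LamHat G)) =
      Set.range (iota G) := by
  classical
  constructor
  · intro Φ₁ Φ₂ hEq
    have hEq' : ∀ x : Lam G, Φ₁ (iota G x) = Φ₂ (iota G x) := fun x =>
      DFunLike.congr_fun hEq x
    obtain ⟨T₁, h₁⟩ := reprPhi Φ₁
    obtain ⟨T₂, h₂⟩ := reprPhi Φ₂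
    ext h
    rw [repr_subset Φ₁ h₁ (Finset.subset_union_left : T₁ ⊆ T₁ ∪ T₂) h,
        repr_subset Φ₂ h₂ (Finset.subset_union_right : T₂ ⊆ T₁ ∪ T₂) h]
    refine Finset.sum_congr rfl fun g _ => ?_
    have : Φ₁ (delta g) = Φ₂ (delta g) := hEq' (MonoidAlgebra.single g⁻¹ 1)
    rw [this]
  · apply Set.Subset.antisymm
    · rintro _ ⟨Φ, rfl⟩
      obtain ⟨T, hT⟩ := reprPhi Φ
      refine ⟨∑ g ∈ T, MonoidAlgebra.single g (Φ (delta g)), ?_⟩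
      apply LinearMap.ext; intro x
      show iota G (∑ g ∈ T, MonoidAlgebra.single g (Φ (delta g))) x = Φ (iota G x)
      rw [map_sum (iota G), LinearMap.sum_apply, hT (iota G x)]
      refine Finset.sum_congr rfl fun g _ => ?_
      show ((x * MonoidAlgebra.single g (Φ (delta g)) : MonoidAlgebra ℤ G)).coeff 1
        = ((MonoidAlgebra.single g 1 * x : MonoidAlgebra ℤ G)).coeff 1 * Φ (delta g)
      rw [MonoidAlgebra.mul_single_apply, MonoidAlgebra.single_mul_apply]
      simp
    · rintro _ ⟨μ, rfl⟩
      refine ⟨∑ g ∈ μ.coeff.support, (μ.coeff g) • evalAt (MonoidAlgebra.single g 1), ?_⟩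
      apply LinearMap.ext; intro x
      show (∑ g ∈ μ.coeff.support, (μ.coeff g) • evalAt (MonoidAlgebra.single g 1)) (iota G x)
        = iota G μ x
      rw [AddMonoidHom.finset_sum_apply]
      show _ = ((x * μ : MonoidAlgebra ℤ G)).coeff 1
      conv_rhs => rw [← MonoidAlgebra.sum_coeff_single μ, Finsupp.sum, Finset.mul_sum]
      rw [MonoidAlgebra.coeff_sum, Finsupp.finset_sum_apply]
      refine Finset.sum_congr rfl fun g _ => ?_
      rw [AddMonoidHom.smul_apply]
      show (μ.coeff g) • (((MonoidAlgebra.single g 1 * x : MonoidAlgebra ℤ G)).coeff 1)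
        = ((x * MonoidAlgebra.single g (μ.coeff g) : MonoidAlgebra ℤ G)).coeff 1
      rw [MonoidAlgebra.mul_single_apply, MonoidAlgebra.single_mul_apply]
      simp [mul_comm]
end
end
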